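/- arXiv:1108.3602 — 2 statements merged into one kernel-verified Lean document; each statement's English description precedes it below -/
import Mathlib

section
/- Let W be a standard one-dimensional Brownian motion, T>0, f:ℝ→ℝ bounded continuous with modulus of continuity osc_f, n_ε a positive integer with δ_ε = T/n_ε, s_i = i δ_ε, q_ε = 2√(δ_ε |log δ_ε|), and for t ∈ [0,T] let i(t) = min{j ∈ [0,n_ε]∩ℤ : s_j ≥ t} and L_{ε,P_ε}(t) = Σ_{i=1}^{i(t)} (f(εW(s_i)) − f(εW(s_{i−1})))(W(s_i) − W(s_{i−1})). Then there exists a constant K_2 > 0 such that for any δ > 0 and ε > 0, P{ sup_{t∈[0,T]} |L_{ε,P_ε}(t)| > δ } ≤ P{ |log δ_ε| · osc_f(ε q_ε) > q_ε δ/(4T) } + K_2 δ_ε, where the first probability on the right-hand side equals 0 or 1 according to whether the deterministic inequality holds. -/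
/-!
If every increment of `W` over a grid step is smaller than `q_ε`, each term of `L_{ε,P_ε}` is at
most `osc_f(ε q_ε) q_ε`, so `sup_t |L_{ε,P_ε}(t)| ≤ n_ε q_ε osc_f(ε q_ε)`, and this is at most `δ`
precisely when the deterministic inequality fails. Otherwise some increment, a centred Gaussian of
variance `δ_ε`, reaches `q_ε`; its sub-Gaussian tail bound is `2 exp(-q_ε² / (2 δ_ε)) = 2 δ_ε²`,
and a union bound over the `n_ε = T / δ_ε` steps gives `2 T δ_ε`.
-/

open MeasureTheory ProbabilityTheory Filter Topology

noncomputable section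

/-- A finite partition of the interval `[a, b]`. -/
structure IntervalPartition (a b : ℝ) where
  n : ℕ
  npos : 0 < n
  u : ℕ → ℝ
  left : u 0 = a
  right : u n = b
  mono : ∀ i, i < n → u i ≤ u (i + 1)

/-- The mesh of a partition. -/
def IntervalPartition.mesh {a b : ℝ} (π : IntervalPartition a b) : ℝ :=
  ⨆ i : Fin π.n, (π.u (i + 1) - π.u i)

/-- The sum of products of increments of `X` and `Y` along a partition. -/
def covSum {Ω : Type*} {a b : ℝ} (X Y : ℝ → Ω → ℝ) (π : IntervalPartition a b) (ω : Ω) : ℝ :=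
  ∑ i ∈ Finset.range π.n,
    (X (π.u (i + 1)) ω - X (π.u i) ω) * (Y (π.u (i + 1)) ω - Y (π.u i) ω)

/-- Left-endpoint Riemann sum of `X` against the increments of `Y` along a partition. -/
def itoSum {Ω : Type*} {a b : ℝ} (X Y : ℝ → Ω → ℝ) (π : IntervalPartition a b) (ω : Ω) : ℝ :=
  ∑ i ∈ Finset.range π.n, X (π.u i) ω * (Y (π.u (i + 1)) ω - Y (π.u i) ω)

/-- `Q` is the quadratic covariation `[X, Y]` on `[a, b]`: the limit in probability of the
sums of products of increments along any sequence of partitions with mesh tending to `0`. -/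
def IsQuadCovar {Ω : Type*} [MeasurableSpace Ω] (P : Measure Ω)
    (X Y : ℝ → Ω → ℝ) (a b : ℝ) (Q : Ω → ℝ) : Prop :=
  ∀ π : ℕ → IntervalPartition a b,
    Tendsto (fun k => (π k).mesh) atTop (𝓝 0) →
      TendstoInMeasure P (fun k => covSum X Y (π k)) atTop Q

/-- `I` is the Itô integral `∫_a^b X dY`: the limit in probability of left-endpoint Riemann
sums along any sequence of partitions with mesh tending to `0`. -/
def IsItoIntegral {Ω : Type*} [MeasurableSpace Ω] (P : Measure Ω)
    (X Y : ℝ → Ω → ℝ) (a b : ℝ) (I : Ω → ℝ) : Prop :=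
  ∀ π : ℕ → IntervalPartition a b,
    Tendsto (fun k => (π k).mesh) atTop (𝓝 0) →
      TendstoInMeasure P (fun k => itoSum X Y (π k)) atTop I

/-- Modulus of continuity of `f`. -/
def osc (f : ℝ → ℝ) (δ : ℝ) : ℝ :=
  sSup {y | ∃ s t : ℝ, |s - t| < δ ∧ y = |f s - f t|}

/-- `W` is a standard one-dimensional Brownian motion under `P`. -/
def IsBrownianMotion {Ω : Type*} [MeasurableSpace Ω] (P : Measure Ω)
    (W : ℝ → Ω → ℝ) : Prop :=
  (∀ t : ℝ, Measurable (W t)) ∧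
  (∀ ω, W 0 ω = 0) ∧
  (∀ ω, Continuous fun t => W t ω) ∧
  (∀ s t : ℝ, 0 ≤ s → s ≤ t →
    Measure.map (fun ω => W t ω - W s ω) P = gaussianReal 0 (t - s).toNNReal) ∧
  (∀ s t : ℝ, 0 ≤ s → s ≤ t →
    Indep (MeasurableSpace.comap (fun ω => W t ω - W s ω) inferInstance)
      (⨆ u ∈ Set.Icc (0:ℝ) s, MeasurableSpace.comap (W u) inferInstance) P)

/-- `B` is a Brownian motion on `[0, T]` with respect to the filtration `F` under `P`. -/
def IsBMWithRespectTo {Ω : Type*} [MeasurableSpace Ω] (P : Measure Ω) (T : ℝ)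
    (F : ℝ → MeasurableSpace Ω) (B : ℝ → Ω → ℝ) : Prop :=
  (∀ t ∈ Set.Icc (0:ℝ) T, @Measurable Ω ℝ (F t) _ (B t)) ∧
  (∀ ω, B 0 ω = 0) ∧
  (∀ ω, ContinuousOn (fun t => B t ω) (Set.Icc 0 T)) ∧
  (∀ s t : ℝ, 0 ≤ s → s ≤ t → t ≤ T →
    Measure.map (fun ω => B t ω - B s ω) P = gaussianReal 0 (t - s).toNNReal) ∧
  (∀ s t : ℝ, 0 ≤ s → s ≤ t → t ≤ T →
    Indep (MeasurableSpace.comap (fun ω => B t ω - B s ω) inferInstance) (F s) P)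


/-- `i(t) = min {j ∈ [0, nε] ∩ ℤ : j·δε ≥ t}`. -/
def iOf (nε : ℕ) (δε t : ℝ) : ℕ :=
  sInf {j : ℕ | j ≤ nε ∧ t ≤ (j : ℝ) * δε}

/-- The approximating sum
`L_{ε,P_ε}(t) = Σ_{i=1}^{i(t)} (f(εW(s_i)) - f(εW(s_{i-1})))(W(s_i) - W(s_{i-1}))`
along the uniform partition `s_i = i·δε`. -/
def LP {Ω : Type*} (f : ℝ → ℝ) (W : ℝ → Ω → ℝ) (ε : ℝ) (nε : ℕ) (δε t : ℝ) (ω : Ω) : ℝ :=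
  ∑ i ∈ Finset.range (iOf nε δε t),
    (f (ε * W (((i : ℝ) + 1) * δε) ω) - f (ε * W ((i : ℝ) * δε) ω)) *
      (W (((i : ℝ) + 1) * δε) ω - W ((i : ℝ) * δε) ω)

open Real
open scoped NNReal

lemma osc_nonneg (f : ℝ → ℝ) (d : ℝ) : 0 ≤ osc f d :=
  Real.sSup_nonneg fun _ ⟨_, _, _, hy⟩ => hy ▸ abs_nonneg _

lemma abs_sub_le_osc {f : ℝ → ℝ} {M : ℝ} (hf : ∀ x, |f x| ≤ M) {d s t : ℝ}
    (h : |s - t| < d) : |f s - f t| ≤ osc f d := by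
  refine le_csSup ⟨2 * M, ?_⟩ ⟨s, t, h, rfl⟩
  rintro _ ⟨x, y, -, rfl⟩
  linarith [abs_sub (f x) (f y), hf x, hf y]

lemma iOf_le (N : ℕ) (δε t : ℝ) : iOf N δε t ≤ N := by
  rcases Set.eq_empty_or_nonempty {j : ℕ | j ≤ N ∧ t ≤ (j : ℝ) * δε} with h | h
  · simp [iOf, h]
  · exact (Nat.sInf_mem h).1

/-- The paper's `q_ε`, as a function of the grid step `Δ = δ_ε`. -/
def gridThreshold (Δ : ℝ) : ℝ := 2 * √(Δ * |log Δ|)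

lemma gridThreshold_nonneg (Δ : ℝ) : 0 ≤ gridThreshold Δ := by
  unfold gridThreshold; positivity

lemma gridThreshold_sq {Δ : ℝ} (hΔ : 0 ≤ Δ) : gridThreshold Δ ^ 2 = 4 * (Δ * |log Δ|) := by
  rw [gridThreshold, mul_pow, sq_sqrt (by positivity)]
  norm_num

-- The choice of `q_ε`: the Gaussian tail at `q_ε` of an increment over one step is `2 Δ ^ 2`.
lemma exp_neg_gridThreshold_sq_div {Δ : ℝ} (hΔ0 : 0 < Δ) (hΔ1 : Δ < 1) :
    exp (-gridThreshold Δ ^ 2 / (2 * Δ)) = Δ ^ 2 := by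
  rw [gridThreshold_sq hΔ0.le, abs_of_neg (log_neg hΔ0 hΔ1),
    show -(4 * (Δ * -log Δ)) / (2 * Δ) = 2 * log Δ by field_simp; ring,
    ← log_rpow hΔ0, exp_log (by positivity)]
  norm_cast

lemma hasSubgaussianMGF_id_gaussianReal (v : ℝ≥0) :
    HasSubgaussianMGF id v (gaussianReal 0 v) :=
  ⟨integrable_exp_mul_gaussianReal, fun t => by simp [mgf_id_gaussianReal]⟩

lemma measureReal_abs_ge_le_of_map_eq_gaussianReal {Ω : Type*} [MeasurableSpace Ω]
    {P : Measure Ω} [IsFiniteMeasure P] {X : Ω → ℝ} (hXm : AEMeasurable X P) {v : ℝ≥0}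
    (hX : P.map X = gaussianReal 0 v) {a : ℝ} (ha : 0 ≤ a) :
    P.real {ω | a ≤ |X ω|} ≤ 2 * exp (-a ^ 2 / (2 * v)) := by
  have hsub : HasSubgaussianMGF X v P :=
    (HasSubgaussianMGF.id_map_iff hXm).1 (hX ▸ hasSubgaussianMGF_id_gaussianReal v)
  calc P.real {ω | a ≤ |X ω|} ≤ P.real ({ω | a ≤ X ω} ∪ {ω | a ≤ (-X) ω}) :=
        measureReal_mono fun ω (hω : a ≤ |X ω|) => le_abs.1 hω
    _ ≤ P.real {ω | a ≤ X ω} + P.real {ω | a ≤ (-X) ω} := measureReal_union_le _ _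
    _ ≤ exp (-a ^ 2 / (2 * v)) + exp (-a ^ 2 / (2 * v)) :=
        add_le_add (hsub.measure_ge_le ha) (hsub.neg.measure_ge_le ha)
    _ = 2 * exp (-a ^ 2 / (2 * v)) := by ring

lemma IsBrownianMotion.measure_abs_sub_ge_le {Ω : Type*} [MeasurableSpace Ω] {P : Measure Ω}
    [IsFiniteMeasure P] {W : ℝ → Ω → ℝ} (hW : IsBrownianMotion P W) {s t a : ℝ} (hs : 0 ≤ s)
    (hst : s ≤ t) (ha : 0 ≤ a) :
    P {ω | a ≤ |W t ω - W s ω|} ≤ ENNReal.ofReal (2 * exp (-a ^ 2 / (2 * (t - s)))) := by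
  have h := measureReal_abs_ge_le_of_map_eq_gaussianReal ((hW.1 t).sub (hW.1 s)).aemeasurable
    (hW.2.2.2.1 s t hs hst) ha
  rw [Real.coe_toNNReal _ (sub_nonneg.2 hst)] at h
  rw [← ofReal_measureReal]
  exact ENNReal.ofReal_le_ofReal h

section UniformGrid

variable {Ω : Type*} {f : ℝ → ℝ} {M : ℝ} {W : ℝ → Ω → ℝ} {ε : ℝ} {N : ℕ} {Δ q : ℝ}

lemma abs_LP_le (hf : ∀ x, |f x| ≤ M) (hε : 0 < ε) (hq : 0 ≤ q) {ω : Ω}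
    (hinc : ∀ i < N, |W ((i + 1) * Δ) ω - W (i * Δ) ω| < q) (t : ℝ) :
    |LP f W ε N Δ t ω| ≤ N * (osc f (ε * q) * q) := by
  have hterm : ∀ i < N, |(f (ε * W ((i + 1) * Δ) ω) - f (ε * W (i * Δ) ω)) *
      (W ((i + 1) * Δ) ω - W (i * Δ) ω)| ≤ osc f (ε * q) * q := by
    intro i hi
    rw [abs_mul]
    refine mul_le_mul (abs_sub_le_osc hf ?_) (hinc i hi).le (abs_nonneg _) (osc_nonneg _ _)
    rw [← mul_sub, abs_mul, abs_of_pos hε]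
    exact mul_lt_mul_of_pos_left (hinc i hi) hε
  calc |LP f W ε N Δ t ω|
      ≤ ∑ i ∈ Finset.range (iOf N Δ t), |(f (ε * W ((i + 1) * Δ) ω) - f (ε * W (i * Δ) ω)) *
          (W ((i + 1) * Δ) ω - W (i * Δ) ω)| := Finset.abs_sum_le_sum_abs _ _
    _ ≤ ∑ _i ∈ Finset.range (iOf N Δ t), osc f (ε * q) * q := Finset.sum_le_sum fun i hi =>
        hterm i ((Finset.mem_range.1 hi).trans_le (iOf_le N Δ t))
    _ ≤ N * (osc f (ε * q) * q) := by
        rw [Finset.sum_const, Finset.card_range, nsmul_eq_mul]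
        gcongr
        · exact mul_nonneg (osc_nonneg _ _) hq
        · exact iOf_le N Δ t

lemma setOf_iSup_abs_LP_gt_subset (hf : ∀ x, |f x| ≤ M) (hε : 0 < ε) (hq : 0 ≤ q) {T δ : ℝ}
    (hδ : 0 ≤ δ) (hN : N * (osc f (ε * q) * q) ≤ δ) :
    {ω | (⨆ t : Set.Icc (0:ℝ) T, |LP f W ε N Δ t ω|) > δ}
      ⊆ ⋃ i ∈ Finset.range N, {ω | q ≤ |W ((i + 1) * Δ) ω - W (i * Δ) ω|} := by
  intro ω hω
  by_contra hmem
  simp only [Set.mem_iUnion, Set.mem_ofPred_eq, Finset.mem_range, not_exists, not_le] at hmem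
  exact (Set.mem_ofPred.1 hω).not_ge
    (Real.iSup_le (fun t => (abs_LP_le hf hε hq hmem t).trans hN) hδ)

lemma natCast_mul_osc_mul_gridThreshold_le {T δ : ℝ} (hT : 0 < T) (hN : 0 < N)
    (hΔ : T / N < 1) (hdet : |log (T / N)| * osc f (ε * gridThreshold (T / N))
      ≤ gridThreshold (T / N) * δ / (4 * T)) :
    N * (osc f (ε * gridThreshold (T / N)) * gridThreshold (T / N)) ≤ δ := by
  set Δ := T / N
  set q := gridThreshold Δ
  set o := osc f (ε * q)
  have hΔ0 : 0 < Δ := by positivity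
  have hL : 0 < |log Δ| := abs_pos.2 (log_neg hΔ0 hΔ).ne
  have hNΔ : N * Δ = T := mul_div_cancel₀ T (by positivity)
  have hq2 : q ^ 2 = 4 * (Δ * |log Δ|) := gridThreshold_sq hΔ0.le
  rw [le_div_iff₀ (by positivity)] at hdet
  have hTΔ : T * (o * q) ≤ Δ * δ := by
    refine le_of_mul_le_mul_left ?_ (by positivity : 0 < 4 * |log Δ|)
    calc 4 * |log Δ| * (T * (o * q)) = q * (|log Δ| * o * (4 * T)) := by ring
      _ ≤ q * (q * δ) := mul_le_mul_of_nonneg_left hdet (gridThreshold_nonneg Δ)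
      _ = 4 * |log Δ| * (Δ * δ) := by rw [← mul_assoc, ← sq, hq2]; ring
  refine le_of_mul_le_mul_left ?_ hΔ0
  calc Δ * (N * (o * q)) = T * (o * q) := by rw [← hNΔ]; ring
    _ ≤ Δ * δ := hTΔ

end UniformGrid

lemma IsBrownianMotion.measure_iSup_abs_LP_gt_le {Ω : Type*} [MeasurableSpace Ω]
    {P : Measure Ω} [IsFiniteMeasure P] {W : ℝ → Ω → ℝ} (hW : IsBrownianMotion P W)
    {f : ℝ → ℝ} {M : ℝ} (hf : ∀ x, |f x| ≤ M) {T ε δ : ℝ} (hT : 0 < T) (hε : 0 < ε)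
    (hδ : 0 ≤ δ) {N : ℕ} (hN : 0 < N) (hΔ : T / N < 1)
    (hdet : |log (T / N)| * osc f (ε * gridThreshold (T / N))
      ≤ gridThreshold (T / N) * δ / (4 * T)) :
    P {ω | (⨆ t : Set.Icc (0:ℝ) T, |LP f W ε N (T / N) t ω|) > δ}
      ≤ ENNReal.ofReal (2 * T * (T / N)) := by
  set Δ := T / N
  set q := gridThreshold Δ
  have hΔ0 : 0 < Δ := by positivity
  have hNΔ : N * Δ = T := mul_div_cancel₀ T (by positivity)
  have hstep : ∀ i : ℕ,
      P {ω | q ≤ |W ((i + 1) * Δ) ω - W (i * Δ) ω|} ≤ ENNReal.ofReal (2 * Δ ^ 2) := by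
    intro i
    have h := hW.measure_abs_sub_ge_le (s := i * Δ) (t := (i + 1) * Δ) (by positivity)
      (by nlinarith) (gridThreshold_nonneg Δ)
    rwa [show ((i : ℝ) + 1) * Δ - i * Δ = Δ by ring, exp_neg_gridThreshold_sq_div hΔ0 hΔ] at h
  calc P {ω | (⨆ t : Set.Icc (0:ℝ) T, |LP f W ε N Δ t ω|) > δ}
      ≤ P (⋃ i ∈ Finset.range N, {ω | q ≤ |W ((i + 1) * Δ) ω - W (i * Δ) ω|}) :=
        measure_mono (setOf_iSup_abs_LP_gt_subset hf hε (gridThreshold_nonneg Δ) hδ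
          (natCast_mul_osc_mul_gridThreshold_le hT hN hΔ hdet))
    _ ≤ ∑ i ∈ Finset.range N, P {ω | q ≤ |W ((i + 1) * Δ) ω - W (i * Δ) ω|} :=
        measure_biUnion_finset_le _ _
    _ ≤ ∑ _i ∈ Finset.range N, ENNReal.ofReal (2 * Δ ^ 2) := Finset.sum_le_sum fun i _ => hstep i
    _ = ENNReal.ofReal (2 * T * Δ) := by
        rw [Finset.sum_const, Finset.card_range, nsmul_eq_mul, ← ENNReal.ofReal_natCast,
          ← ENNReal.ofReal_mul (by positivity), ← hNΔ]
        ring_nf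

theorem approximating_sum_tail_estimate_general
    {Ω : Type*} [MeasurableSpace Ω] (P : Measure Ω) [IsProbabilityMeasure P]
    (W : ℝ → Ω → ℝ) (hW : IsBrownianMotion P W)
    (T : ℝ) (hT : 0 < T)
    (f : ℝ → ℝ) (hfb : ∃ M : ℝ, ∀ x, |f x| ≤ M)
    (n : ℝ → ℕ) :
    ∃ K₂ > 0, ∀ ε > 0, ∀ δ > 0,
      P {ω | (⨆ t : Set.Icc (0:ℝ) T, |LP f W ε (n ε) (T / n ε) t ω|) > δ}
        ≤ P {_ω : Ω | |Real.log (T / n ε)| *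
              osc f (ε * (2 * Real.sqrt ((T / n ε) * |Real.log (T / n ε)|)))
            > (2 * Real.sqrt ((T / n ε) * |Real.log (T / n ε)|)) * δ / (4 * T)}
          + ENNReal.ofReal (K₂ * (T / n ε)) := by
  obtain ⟨M, hM⟩ := hfb
  refine ⟨2 * T + 1, by positivity, fun ε hε δ hδ => ?_⟩
  set N := n ε
  set Δ := T / N
  change _ ≤ P {_ω : Ω | |log Δ| * osc f (ε * gridThreshold Δ) > gridThreshold Δ * δ / (4 * T)} + _
  by_cases hdet : |log Δ| * osc f (ε * gridThreshold Δ) > gridThreshold Δ * δ / (4 * T)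
  · exact prob_le_one.trans (by simp [hdet])
  by_cases hΔ : 1 ≤ Δ
  · refine prob_le_one.trans (le_add_left ?_)
    rw [← ENNReal.ofReal_one]
    exact ENNReal.ofReal_le_ofReal (by nlinarith)
  refine le_add_left ?_
  rcases N.eq_zero_or_pos with hN | hN
  · have h := setOf_iSup_abs_LP_gt_subset (W := W) (T := T) (N := N) (Δ := Δ) (q := 0) hM hε
      le_rfl hδ.le (by simp [hδ.le])
    rw [measure_mono_null h (by simp [hN])]
    exact zero_le
  · refine (hW.measure_iSup_abs_LP_gt_le hM hT hε hδ.le hN (not_le.1 hΔ) (not_lt.1 hdet)).trans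
      (ENNReal.ofReal_le_ofReal ?_)
    have : 0 ≤ Δ := by positivity
    nlinarith

/-- Lemma 3 of the paper. -/
theorem approximating_sum_tail_estimate
    {Ω : Type*} [MeasurableSpace Ω] (P : Measure Ω) [IsProbabilityMeasure P]
    (W : ℝ → Ω → ℝ) (hW : IsBrownianMotion P W)
    (T : ℝ) (hT : 0 < T)
    (f : ℝ → ℝ) (hfb : ∃ M : ℝ, ∀ x, |f x| ≤ M) (hfc : Continuous f)
    (n : ℝ → ℕ) (hn : ∀ ε > 0, 0 < n ε) :
    ∃ K₂ > 0, ∀ ε > 0, ∀ δ > 0,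
      P {ω | (⨆ t : Set.Icc (0:ℝ) T, |LP f W ε (n ε) (T / n ε) t ω|) > δ}
        ≤ P {_ω : Ω | |Real.log (T / n ε)| *
              osc f (ε * (2 * Real.sqrt ((T / n ε) * |Real.log (T / n ε)|)))
            > (2 * Real.sqrt ((T / n ε) * |Real.log (T / n ε)|)) * δ / (4 * T)}
          + ENNReal.ofReal (K₂ * (T / n ε)) :=
  approximating_sum_tail_estimate_general P W hW T hT f hfb n

end
end

section
/- Let W be a standard one-dimensional Brownian motion, T>0, Ŵ(t) = W(T−t), and let β be the Brownian motion β(t) = Ŵ(t) − W(T) + ∫_0^t Ŵ(s)/(T−s) ds with respect to the enlarged filtration H. Then for all t ∈ [0,T], Ŵ(t) = W(T)(1 − t/T) + (T−t) ∫_0^t (T−s)^{−1} dβ(s); that is, the variation-of-constants formula X(t) = ξ(1 − t/T) + (T−t)∫_0^t (T−s)^{−1} dβ(s) furnishes the unique solution of dX(t) = −X(t)/(T−t) dt + dβ(t), X(0) = ξ = W(T). -/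
open MeasureTheory ProbabilityTheory Filter Topology

noncomputable section

/-!
For `t < T` the integrand `s ↦ (T - s)⁻¹` is deterministic and smooth on `[0, t]`, so its Itô
sums against the continuous path `β = Ŵ + A`, `A' = Ŵ / (T - ·)`, converge pathwise.
Summation by parts gives `∫₀ᵗ (T - s)⁻¹ dŴ = Ŵ(t)/(T - t) - Ŵ(0)/T - ∫₀ᵗ Ŵ(s)/(T - s)² ds`,
while `∫₀ᵗ (T - s)⁻¹ dA = ∫₀ᵗ Ŵ(s)/(T - s)² ds`. The Lebesgue integrals cancel, leaving
`∫₀ᵗ (T - s)⁻¹ dβ = Ŵ(t)/(T - t) - W(T)/T`, and the limit in probability agrees a.s. with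
this pathwise limit.
-/

open Set Finset intervalIntegral

theorem sum_range_mul_sub_by_parts {R : Type*} [CommRing R] (x y : ℕ → R) (n : ℕ) :
    ∑ i ∈ range n, x i * (y (i + 1) - y i)
      = x n * y n - x 0 * y 0 - ∑ i ∈ range n, y (i + 1) * (x (i + 1) - x i) := by
  have htel : ∑ i ∈ range n, (x (i + 1) * y (i + 1) - x i * y i) = x n * y n - x 0 * y 0 :=
    Finset.sum_range_sub (fun i => x i * y i) n
  rw [← htel, ← sum_sub_distrib]
  exact sum_congr rfl fun i _ => by ring

theorem MeasureTheory.TendstoInMeasure.ae_eq_of_ae_tendsto {α E : Type*} [MeasurableSpace α]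
    {μ : Measure α} [EMetricSpace E] {f : ℕ → α → E} {g h : α → E}
    (hg : TendstoInMeasure μ f atTop g) (hh : ∀ᵐ x ∂μ, Tendsto (fun n => f n x) atTop (𝓝 (h x))) :
    g =ᵐ[μ] h := by
  obtain ⟨ns, hns, hgns⟩ := hg.exists_seq_tendsto_ae
  filter_upwards [hgns, hh] with x hgx hhx
  exact tendsto_nhds_unique hgx (hhx.comp hns.tendsto_atTop)

theorem hasDerivAt_inv_const_sub {c s : ℝ} (hs : s ≠ c) :
    HasDerivAt (fun r => (c - r)⁻¹) ((c - s)⁻¹ ^ 2) s := by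
  have h := (hasDerivAt_inv (sub_ne_zero.2 hs.symm)).comp s ((hasDerivAt_id s).const_sub c)
  rwa [neg_mul_neg, mul_one, ← inv_pow] at h

namespace IntervalPartition

variable {a b : ℝ} (π : IntervalPartition a b)

theorem u_le_u {i j : ℕ} (hij : i ≤ j) (hj : j ≤ π.n) : π.u i ≤ π.u j := by
  induction j, hij using Nat.le_induction with
  | base => rfl
  | succ j _ ih => exact (ih (by omega)).trans (π.mono j (by omega))

theorem u_mem {i : ℕ} (hi : i ≤ π.n) : π.u i ∈ Icc a b := by
  constructor
  · simpa only [π.left] using π.u_le_u (Nat.zero_le i) hi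
  · simpa only [π.right] using π.u_le_u hi le_rfl

theorem left_le_right (π : IntervalPartition a b) : a ≤ b := by
  simpa only [π.left] using (π.u_mem π.n.zero_le).2

theorem Icc_subset {i : ℕ} (hi : i < π.n) : Icc (π.u i) (π.u (i + 1)) ⊆ Icc a b :=
  Icc_subset_Icc (π.u_mem hi.le).1 (π.u_mem hi).2

theorem sub_le_mesh {i : ℕ} (hi : i < π.n) : π.u (i + 1) - π.u i ≤ π.mesh :=
  le_ciSup (f := fun j : Fin π.n => π.u (j + 1) - π.u j) (finite_range _).bddAbove ⟨i, hi⟩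

theorem intervalIntegrable_piece {f : ℝ → ℝ} (hf : ContinuousOn f (Icc a b)) {i : ℕ}
    (hi : i < π.n) : IntervalIntegrable f volume (π.u i) (π.u (i + 1)) :=
  (hf.mono (π.Icc_subset hi)).intervalIntegrable_of_Icc (π.mono i hi)

theorem sum_integral {f : ℝ → ℝ} (hf : ContinuousOn f (Icc a b)) :
    ∑ i ∈ range π.n, ∫ s in π.u i..π.u (i + 1), f s = ∫ s in a..b, f s := by
  rw [sum_integral_adjacent_intervals (a := π.u) fun i hi => π.intervalIntegrable_piece hf hi,
    π.left, π.right]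

def uniform (hab : a ≤ b) (k : ℕ) : IntervalPartition a b where
  n := k + 1
  npos := k.succ_pos
  u i := a + (b - a) * i / (k + 1)
  left := by simp
  right := by push_cast; field_simp; ring
  mono i _ := by
    gcongr
    omega

theorem mesh_uniform (hab : a ≤ b) (k : ℕ) : (uniform hab k).mesh = (b - a) / (k + 1) := by
  have hstep : ∀ i : ℕ, (uniform hab k).u (i + 1) - (uniform hab k).u i = (b - a) / (k + 1) :=
    fun i => by simp only [uniform]; push_cast; ring
  have : Nonempty (Fin (uniform hab k).n) := ⟨⟨0, (uniform hab k).npos⟩⟩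
  simp only [mesh, hstep, ciSup_const]

theorem tendsto_mesh_uniform (hab : a ≤ b) :
    Tendsto (fun k => (uniform hab k).mesh) atTop (𝓝 0) := by
  simp only [mesh_uniform]
  exact tendsto_const_nhds.div_atTop (tendsto_natCast_atTop_atTop.atTop_add tendsto_const_nhds)

theorem abs_sum_mul_integral_sub_integral_le {g φ : ℝ → ℝ} {ε : ℝ}
    (hg : ContinuousOn g (Icc a b)) (hφ : ContinuousOn φ (Icc a b))
    (hε : ∀ x ∈ Icc a b, ∀ y ∈ Icc a b, dist x y ≤ π.mesh → dist (g x) (g y) ≤ ε)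
    {v : ℕ → ℝ} (hv : ∀ i < π.n, v i ∈ Icc (π.u i) (π.u (i + 1))) :
    |∑ i ∈ range π.n, g (v i) * (∫ s in π.u i..π.u (i + 1), φ s) - ∫ s in a..b, g s * φ s|
      ≤ ε * ∫ s in a..b, |φ s| := by
  rw [← π.sum_integral (f := fun s => g s * φ s) (hg.mul hφ),
    ← π.sum_integral (f := fun s => |φ s|) (continuous_abs.comp_continuousOn hφ),
    ← sum_sub_distrib, mul_sum]
  refine (abs_sum_le_sum_abs _ _).trans (sum_le_sum fun i hi => ?_)
  have hi : i < π.n := mem_range.1 hi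
  have hφi := π.intervalIntegrable_piece hφ hi
  have hgφi := π.intervalIntegrable_piece (f := fun s => g s * φ s) (hg.mul hφ) hi
  rw [← intervalIntegral.integral_const_mul, ← integral_sub (hφi.const_mul _) hgφi,
    ← intervalIntegral.integral_const_mul]
  refine (abs_integral_le_integral_abs (π.mono i hi)).trans (integral_mono_on (π.mono i hi)
    ((hφi.const_mul _).sub hgφi).abs (hφi.abs.const_mul ε) fun s hs => ?_)
  have hdist : dist (v i) s ≤ π.mesh := by
    have := π.sub_le_mesh hi
    rw [Real.dist_eq, abs_le]
    constructor <;> linarith [(hv i hi).1, (hv i hi).2, hs.1, hs.2]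
  rw [← sub_mul, abs_mul]
  exact mul_le_mul_of_nonneg_right
    (hε _ (π.Icc_subset hi (hv i hi)) _ (π.Icc_subset hi hs) hdist) (abs_nonneg _)

end IntervalPartition

section

variable {a b : ℝ}

theorem tendsto_sum_mul_integral {g φ : ℝ → ℝ} (hg : ContinuousOn g (Icc a b))
    (hφ : ContinuousOn φ (Icc a b)) {π : ℕ → IntervalPartition a b}
    (hπ : Tendsto (fun k => (π k).mesh) atTop (𝓝 0)) {v : ℕ → ℕ → ℝ}
    (hv : ∀ k, ∀ i < (π k).n, v k i ∈ Icc ((π k).u i) ((π k).u (i + 1))) :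
    Tendsto (fun k => ∑ i ∈ range (π k).n, g (v k i) * ∫ s in (π k).u i..(π k).u (i + 1), φ s)
      atTop (𝓝 (∫ s in a..b, g s * φ s)) := by
  set C := ∫ s in a..b, |φ s|
  have hC : 0 ≤ C := integral_nonneg (π 0).left_le_right fun s _ => abs_nonneg _
  refine Metric.tendsto_nhds.2 fun ε hε => ?_
  obtain ⟨δ, hδ, hgδ⟩ := Metric.uniformContinuousOn_iff_le.1
    (isCompact_Icc.uniformContinuousOn_of_continuous hg) (ε / (C + 1)) (by positivity)
  filter_upwards [hπ.eventually (eventually_le_nhds hδ)] with k hk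
  rw [Real.dist_eq]
  calc _ ≤ ε / (C + 1) * C := (π k).abs_sum_mul_integral_sub_integral_le hg hφ
          (fun x hx y hy hxy => hgδ x hx y hy (hxy.trans hk)) (hv k)
    _ < ε := by rw [div_mul_eq_mul_div, div_lt_iff₀ (by positivity)]; nlinarith

theorem itoSum_eq_add {Ω : Type*} (X Y Y₁ Y₂ : ℝ → Ω → ℝ) (π : IntervalPartition a b) {ω : Ω}
    (hY : ∀ s, Y s ω = Y₁ s ω + Y₂ s ω) :
    itoSum X Y π ω = itoSum X Y₁ π ω + itoSum X Y₂ π ω := by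
  simp only [itoSum, hY, ← sum_add_distrib]
  exact sum_congr rfl fun i _ => by ring

theorem tendsto_itoSum_of_hasDerivAt {Ω : Type*} {f f' : ℝ → ℝ}
    (hf : ∀ s ∈ Icc a b, HasDerivAt f (f' s) s) (hf' : ContinuousOn f' (Icc a b))
    {Y : ℝ → Ω → ℝ} {ω : Ω} (hY : ContinuousOn (fun s => Y s ω) (Icc a b))
    {π : ℕ → IntervalPartition a b} (hπ : Tendsto (fun k => (π k).mesh) atTop (𝓝 0)) :
    Tendsto (fun k => itoSum (fun s _ => f s) Y (π k) ω) atTop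
      (𝓝 (f b * Y b ω - f a * Y a ω - ∫ s in a..b, Y s ω * f' s)) := by
  have hsum : ∀ k, itoSum (fun s _ => f s) Y (π k) ω = f b * Y b ω - f a * Y a ω -
      ∑ i ∈ range (π k).n, Y ((π k).u (i + 1)) ω * ∫ s in (π k).u i..(π k).u (i + 1), f' s := by
    intro k
    rw [itoSum, sum_range_mul_sub_by_parts (fun i => f ((π k).u i)) (fun i => Y ((π k).u i) ω),
      (π k).left, (π k).right]
    congr 1
    refine sum_congr rfl fun i hi => ?_
    have hi : i < (π k).n := mem_range.1 hi
    rw [integral_eq_sub_of_hasDerivAt (fun s hs => hf s ((π k).Icc_subset hi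
      (uIcc_of_le ((π k).mono i hi) ▸ hs))) ((π k).intervalIntegrable_piece hf' hi)]
  simp only [hsum]
  exact tendsto_const_nhds.sub <| tendsto_sum_mul_integral hY hf' hπ
    fun k i hi => ⟨(π k).mono i hi, le_rfl⟩

theorem tendsto_itoSum_of_eq_integral {Ω : Type*} {g φ : ℝ → ℝ} (hg : ContinuousOn g (Icc a b))
    (hφ : ContinuousOn φ (Icc a b)) {Y : ℝ → Ω → ℝ} {ω : Ω}
    (hY : ∀ s ∈ Icc a b, Y s ω = Y a ω + ∫ r in a..s, φ r)
    {π : ℕ → IntervalPartition a b} (hπ : Tendsto (fun k => (π k).mesh) atTop (𝓝 0)) :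
    Tendsto (fun k => itoSum (fun s _ => g s) Y (π k) ω) atTop (𝓝 (∫ s in a..b, g s * φ s)) := by
  have hint : ∀ s ∈ Icc a b, IntervalIntegrable φ volume a s := fun s hs =>
    (hφ.mono (Icc_subset_Icc_right hs.2)).intervalIntegrable_of_Icc hs.1
  have hsum : ∀ k, itoSum (fun s _ => g s) Y (π k) ω =
      ∑ i ∈ range (π k).n, g ((π k).u i) * ∫ s in (π k).u i..(π k).u (i + 1), φ s := by
    refine fun k => sum_congr rfl fun i hi => ?_
    have hi : i < (π k).n := mem_range.1 hi
    rw [hY _ ((π k).u_mem hi), hY _ ((π k).u_mem hi.le), add_sub_add_left_eq_sub,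
      integral_interval_sub_left (hint _ ((π k).u_mem hi)) (hint _ ((π k).u_mem hi.le))]
  simp only [hsum]
  exact tendsto_sum_mul_integral hg hφ hπ fun k i hi => ⟨le_rfl, (π k).mono i hi⟩

theorem tendsto_itoSum_inv_const_sub {Ω : Type*} {T t : ℝ} (htT : t < T) {X β : ℝ → Ω → ℝ}
    {ω : Ω} (hX : ContinuousOn (fun s => X s ω) (Icc 0 t))
    (hβ : ∀ s, β s ω = X s ω - X 0 ω + ∫ r in (0 : ℝ)..s, X r ω / (T - r))
    {π : ℕ → IntervalPartition 0 t} (hπ : Tendsto (fun k => (π k).mesh) atTop (𝓝 0)) :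
    Tendsto (fun k => itoSum (fun s _ => (T - s)⁻¹) β (π k) ω) atTop
      (𝓝 ((T - t)⁻¹ * X t ω - T⁻¹ * X 0 ω)) := by
  have hne : ∀ s ∈ Icc 0 t, T - s ≠ 0 := fun s hs => by linarith [hs.2]
  have hinv : ContinuousOn (fun s => (T - s)⁻¹) (Icc 0 t) :=
    (continuousOn_const.sub continuousOn_id).inv₀ hne
  have hdrift : ContinuousOn (fun s => X s ω / (T - s)) (Icc 0 t) :=
    hX.div (continuousOn_const.sub continuousOn_id) hne
  have hparts := tendsto_itoSum_of_hasDerivAt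
    (fun s hs => hasDerivAt_inv_const_sub (by linarith [hs.2])) (hinv.pow 2) hX hπ
  have hdriftPart := tendsto_itoSum_of_eq_integral (Y := fun s (_ : Ω) => -X 0 ω +
    ∫ r in (0 : ℝ)..s, X r ω / (T - r)) (ω := ω) hinv hdrift (fun s _ => by simp) hπ
  have hcancel : ∫ s in (0 : ℝ)..t, (T - s)⁻¹ * (X s ω / (T - s))
      = ∫ s in (0 : ℝ)..t, X s ω * (T - s)⁻¹ ^ 2 :=
    integral_congr fun s _ => by ring
  convert hparts.add hdriftPart using 2 with k
  · exact itoSum_eq_add _ _ _ _ _ fun s => by rw [hβ]; ring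
  · rw [hcancel, sub_zero]; ring

end

theorem variation_of_constants_time_reversal_general
    {Ω : Type*} [MeasurableSpace Ω] (P : Measure Ω)
    (W : ℝ → Ω → ℝ) (hW : IsBrownianMotion P W)
    (T : ℝ) (hT : 0 < T)
    (β : ℝ → Ω → ℝ)
    (hβ : ∀ t, ∀ ω,
      β t ω = W (T - t) ω - W T ω + ∫ s in (0:ℝ)..t, W (T - s) ω / (T - s))
    (I : ℝ → Ω → ℝ)
    (hI : ∀ t ∈ Set.Ico (0:ℝ) T,
      IsItoIntegral P (fun s _ => (T - s)⁻¹) β 0 t (I t)) :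
    ∀ t ∈ Set.Icc (0:ℝ) T, ∀ᵐ ω ∂P,
      W (T - t) ω = W T ω * (1 - t / T) + (T - t) * I t ω := by
  intro t ht
  obtain rfl | htT := ht.2.eq_or_lt
  · exact ae_of_all _ fun ω => by simp [hW.2.1 ω, hT.ne']
  have hπ := IntervalPartition.tendsto_mesh_uniform ht.1
  have hpath : ∀ ω, Tendsto (fun k => itoSum (fun s _ => (T - s)⁻¹) β
      (IntervalPartition.uniform ht.1 k) ω) atTop (𝓝 ((T - t)⁻¹ * W (T - t) ω - T⁻¹ * W T ω)) :=
    fun ω => by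
      simpa only [sub_zero] using tendsto_itoSum_inv_const_sub htT (X := fun s ω => W (T - s) ω)
        ((hW.2.2.1 ω).comp (continuous_sub_left T)).continuousOn
        (fun s => by simpa only [sub_zero] using hβ s ω) hπ
  filter_upwards [(hI t ⟨ht.1, htT⟩ _ hπ).ae_eq_of_ae_tendsto (ae_of_all _ hpath)] with ω hω
  rw [hω]
  field_simp [(sub_pos.2 htT).ne']
  ring

/-- variation of constants formula for the time-reversed Brownian motion:
`Ŵ(t) = W(T)(1 - t/T) + (T - t) ∫₀ᵗ (T - s)⁻¹ dβ(s)` for `t ∈ [0, T]`, where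
`β(t) = Ŵ(t) - W(T) + ∫₀ᵗ Ŵ(s)/(T-s) ds` is a Brownian motion with respect to the
enlarged filtration `H`. -/
theorem variation_of_constants_time_reversal
    {Ω : Type*} [MeasurableSpace Ω] (P : Measure Ω) [IsProbabilityMeasure P]
    (W : ℝ → Ω → ℝ) (hW : IsBrownianMotion P W)
    (T : ℝ) (hT : 0 < T)
    (β : ℝ → Ω → ℝ)
    (hβ : ∀ t, ∀ ω,
      β t ω = W (T - t) ω - W T ω + ∫ s in (0:ℝ)..t, W (T - s) ω / (T - s))
    (hβBM : IsBMWithRespectTo P T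
      (fun t => MeasurableSpace.comap (W T) inferInstance ⊔
        ⨆ u ∈ Set.Icc (0:ℝ) t, MeasurableSpace.comap (β u) inferInstance) β)
    (I : ℝ → Ω → ℝ)
    (hI : ∀ t ∈ Set.Ico (0:ℝ) T,
      IsItoIntegral P (fun s _ => (T - s)⁻¹) β 0 t (I t)) :
    ∀ t ∈ Set.Icc (0:ℝ) T, ∀ᵐ ω ∂P,
      W (T - t) ω = W T ω * (1 - t / T) + (T - t) * I t ω :=
  variation_of_constants_time_reversal_general P W hW T hT β hβ I hI

end
end
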